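/- For every p ∈ (0,∞) and every finitely supported family {a_Q} of non-negative reals indexed by dyadic cubes, pointwise (∑_Q a_Q 1_Q)^p ≍_p ∑_Q a_Q 1_Q (∑_{R ⊇ Q} a_R 1_R)^{p-1}, with implied constants depending only on p. -/

import Mathlib

open MeasureTheory ENNReal Filter

/-- A dyadic cube `2^k([0,1)^d + j)` in `ℝ^d`. -/
structure DyadicCube (d : ℕ) where
  k : ℤ
  j : Fin d → ℤ

/-- The underlying set of a dyadic cube. -/
def DyadicCube.toSet {d : ℕ} (Q : DyadicCube d) : Set (Fin d → ℝ) :=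
  {x | ∀ i, (2:ℝ) ^ Q.k * (Q.j i) ≤ x i ∧ x i < (2:ℝ) ^ Q.k * (Q.j i + 1)}

/-! At a point `x` the cubes `Q ∋ x` with `a_Q ≠ 0` form a finite chain under inclusion. Writing
`S_Q = ∑_{R ⊇ Q} a_R`, remove the lowest class of the chain: `(∑ a)^p` drops from `S^p` to `S'^p`,
and by Bernoulli's inequality for `t = S'/S ∈ [0,1]` the drop `S^p - S'^p` lies between `min 1 p`
and `max 1 p` times `(S - S') S^(p-1)`, which is exactly the contribution of the removed class to
`∑_Q a_Q S_Q^(p-1)`. Induction on the chain sums these comparisons. -/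

lemma one_sub_rpow_bounds {p t : ℝ} (hp : 0 ≤ p) (ht₀ : 0 ≤ t) (ht₁ : t ≤ 1) :
    min 1 p * (1 - t) ≤ 1 - t ^ p ∧ 1 - t ^ p ≤ max 1 p * (1 - t) := by
  have hs : -1 ≤ t - 1 := by linarith
  rcases le_total 1 p with hp₁ | hp₁
  · have bernoulli := one_add_mul_self_le_rpow_one_add hs hp₁
    rw [add_sub_cancel] at bernoulli
    rw [min_eq_left hp₁, max_eq_right hp₁]
    constructor
    · linarith [Real.rpow_le_self_of_le_one ht₀ ht₁ hp₁]
    · linarith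
  · have bernoulli := rpow_one_add_le_one_add_mul_self hs hp hp₁
    rw [add_sub_cancel] at bernoulli
    rw [min_eq_right hp₁, max_eq_left hp₁]
    constructor
    · linarith
    · linarith [Real.self_le_rpow_of_le_one ht₀ ht₁ hp₁]

lemma rpow_sub_rpow_bounds {p a b : ℝ} (hp : 0 ≤ p) (hb : 0 ≤ b) (hba : b ≤ a) :
    min 1 p * ((a - b) * a ^ (p - 1)) ≤ a ^ p - b ^ p ∧
      a ^ p - b ^ p ≤ max 1 p * ((a - b) * a ^ (p - 1)) := by
  rcases (hb.trans hba).eq_or_lt with rfl | ha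
  · obtain rfl := le_antisymm hba hb
    simp
  have hdiff : a ^ p - b ^ p = a ^ p * (1 - (b / a) ^ p) := by
    rw [Real.div_rpow hb ha.le, mul_sub, mul_div_cancel₀ _ (Real.rpow_pos_of_pos ha p).ne', mul_one]
  have hderiv : (a - b) * a ^ (p - 1) = a ^ p * (1 - b / a) := by
    rw [Real.rpow_sub_one ha.ne']
    field_simp
  have hap := (Real.rpow_pos_of_pos ha p).le
  obtain ⟨hlow, hup⟩ := one_sub_rpow_bounds hp (div_nonneg hb ha.le) ((div_le_one ha).2 hba)
  rw [hdiff, hderiv, mul_left_comm, mul_left_comm (max 1 p)]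
  exact ⟨mul_le_mul_of_nonneg_left hlow hap, mul_le_mul_of_nonneg_left hup hap⟩

lemma IsChain.exists_forall_le_of_finset {ι : Type*} [Preorder ι] {s : Finset ι}
    (hs : IsChain (· ≤ ·) (s : Set ι)) (hne : s.Nonempty) : ∃ m ∈ s, ∀ j ∈ s, m ≤ j := by
  obtain ⟨m, hm, hmin⟩ := s.exists_minimal hne
  exact ⟨m, hm, fun j hj => (hs.total (Finset.mem_coe.2 hm) hj).elim id (hmin hj)⟩

theorem Finset.sub_le_sum_mul_of_isChain {ι : Type*} [Preorder ι] [DecidableLE ι]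
    {φ ψ : ℝ → ℝ} (hφ : ∀ a b, 0 ≤ b → b ≤ a → φ a - φ b ≤ (a - b) * ψ a)
    {f : ι → ℝ} (s : Finset ι) (hs : IsChain (· ≤ ·) (s : Set ι)) (hf : ∀ i ∈ s, 0 ≤ f i) :
    φ (∑ i ∈ s, f i) - φ 0 ≤ ∑ i ∈ s, f i * ψ (∑ j ∈ s with i ≤ j, f j) := by
  classical
  induction s using Finset.strongInduction with
  | H s ih =>
    rcases s.eq_empty_or_nonempty with rfl | hne
    · simp
    obtain ⟨m, hm, hm_le⟩ := hs.exists_forall_le_of_finset hne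
    set M := {i ∈ s | i ≤ m} with hM_def
    have hMs : M ⊆ s := Finset.filter_subset _ _
    have hMne : M.Nonempty := ⟨m, Finset.mem_filter.2 ⟨hm, le_rfl⟩⟩
    have hfilter_M : ∀ i ∈ M, {j ∈ s | i ≤ j} = s := fun i hi =>
      Finset.filter_true_of_mem fun j hj => (Finset.mem_filter.1 hi).2.trans (hm_le j hj)
    -- `M` is downward closed in `s`
    have hfilter_sdiff : ∀ i ∈ s \ M, {j ∈ s | i ≤ j} = {j ∈ s \ M | i ≤ j} := by
      intro i hi
      obtain ⟨his, hiM⟩ := Finset.mem_sdiff.1 hi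
      ext j
      simp only [Finset.mem_filter, Finset.mem_sdiff, hM_def]
      refine ⟨fun ⟨hj, hij⟩ => ⟨⟨hj, fun hjm => hiM ?_⟩, hij⟩, fun ⟨⟨hj, _⟩, hij⟩ => ⟨hj, hij⟩⟩
      exact Finset.mem_filter.2 ⟨his, hij.trans hjm.2⟩
    have ih' := ih (s \ M) (Finset.sdiff_ssubset hMs hMne) (hs.mono (by simp))
      fun i hi => hf i (Finset.mem_sdiff.1 hi).1
    have hsum : ∑ i ∈ s \ M, f i + ∑ i ∈ M, f i = ∑ i ∈ s, f i := Finset.sum_sdiff hMs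
    have hstep := hφ (∑ i ∈ s, f i) (∑ i ∈ s \ M, f i)
      (Finset.sum_nonneg fun i hi => hf i (Finset.mem_sdiff.1 hi).1)
      (by linarith [Finset.sum_nonneg fun i hi => hf i (hMs hi)])
    rw [show ∑ i ∈ s, f i - ∑ i ∈ s \ M, f i = ∑ i ∈ M, f i by linarith] at hstep
    calc φ (∑ i ∈ s, f i) - φ 0
        = (φ (∑ i ∈ s, f i) - φ (∑ i ∈ s \ M, f i)) + (φ (∑ i ∈ s \ M, f i) - φ 0) := by ring
      _ ≤ (∑ i ∈ M, f i) * ψ (∑ i ∈ s, f i) +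
            ∑ i ∈ s \ M, f i * ψ (∑ j ∈ s \ M with i ≤ j, f j) := add_le_add hstep ih'
      _ = ∑ i ∈ s, f i * ψ (∑ j ∈ s with i ≤ j, f j) := by
          rw [Finset.sum_mul, add_comm,
            ← Finset.sum_sdiff hMs (f := fun i => f i * ψ (∑ j ∈ s with i ≤ j, f j))]
          congr 1
          · exact Finset.sum_congr rfl fun i hi => by rw [hfilter_sdiff i hi]
          · exact Finset.sum_congr rfl fun i hi => by rw [hfilter_M i hi]

theorem Finset.rpow_sum_bounds_of_isChain {ι : Type*} [Preorder ι] [DecidableLE ι]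
    {p : ℝ} (hp : 0 < p) {f : ι → ℝ} (s : Finset ι) (hs : IsChain (· ≤ ·) (s : Set ι))
    (hf : ∀ i ∈ s, 0 ≤ f i) :
    min 1 p * ∑ i ∈ s, f i * (∑ j ∈ s with i ≤ j, f j) ^ (p - 1) ≤ (∑ i ∈ s, f i) ^ p ∧
      (∑ i ∈ s, f i) ^ p ≤ max 1 p * ∑ i ∈ s, f i * (∑ j ∈ s with i ≤ j, f j) ^ (p - 1) := by
  have hzero : (0 : ℝ) ^ p = 0 := Real.zero_rpow hp.ne'
  constructor
  · have h := s.sub_le_sum_mul_of_isChain (φ := fun t => -t ^ p)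
      (ψ := fun t => -(min 1 p * t ^ (p - 1)))
      (fun a b hb hba => by linarith [(rpow_sub_rpow_bounds hp.le hb hba).1]) hs hf
    simp only [hzero, neg_zero, sub_zero, mul_neg, Finset.sum_neg_distrib, neg_le_neg_iff] at h
    simpa only [Finset.mul_sum, mul_left_comm] using h
  · have h := s.sub_le_sum_mul_of_isChain (φ := fun t => t ^ p)
      (ψ := fun t => max 1 p * t ^ (p - 1))
      (fun a b hb hba => by linarith [(rpow_sub_rpow_bounds hp.le hb hba).2]) hs hf
    simp only [hzero, sub_zero] at h
    simpa only [Finset.mul_sum, mul_left_comm] using h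

theorem rpow_finsum_bounds_of_isChain {ι : Type*} [Preorder ι] {p : ℝ} (hp : 0 < p)
    {f : ι → ℝ} (hf : ∀ i, 0 ≤ f i) (hfin : (Function.support f).Finite)
    (hchain : IsChain (· ≤ ·) (Function.support f)) :
    min 1 p * ∑ᶠ i, f i * (∑ᶠ (j) (_ : i ≤ j), f j) ^ (p - 1) ≤ (∑ᶠ i, f i) ^ p ∧
      (∑ᶠ i, f i) ^ p ≤ max 1 p * ∑ᶠ i, f i * (∑ᶠ (j) (_ : i ≤ j), f j) ^ (p - 1) := by
  classical
  set s := hfin.toFinset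
  have hinner : ∀ i, ∑ᶠ (j) (_ : i ≤ j), f j = ∑ j ∈ s with i ≤ j, f j := fun i =>
    finsum_cond_eq_sum_of_cond_iff f fun hj => by simp [s, Function.mem_support.2 hj]
  have hsupp : Function.support (fun i => f i * (∑ᶠ (j) (_ : i ≤ j), f j) ^ (p - 1)) ⊆ s :=
    fun i hi => by simpa [s] using left_ne_zero_of_mul hi
  rw [finsum_eq_sum_of_support_subset f (s := s) (by simp [s]),
    finsum_eq_sum_of_support_subset _ hsupp]
  simp only [hinner]
  exact s.rpow_sum_bounds_of_isChain hp (by simpa [s] using hchain) fun i _ => hf i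

lemma Int.floor_div_two_zpow_of_le {k l : ℤ} (hkl : k ≤ l) (t : ℝ) :
    ⌊t / 2 ^ l⌋ = ⌊t / 2 ^ k⌋ / 2 ^ (l - k).toNat := by
  have hpow : (2 : ℝ) ^ l = 2 ^ k * ((2 ^ (l - k).toNat : ℕ) : ℝ) := by
    rw [Nat.cast_pow, Nat.cast_ofNat, ← zpow_natCast, ← zpow_add₀ two_ne_zero,
      Int.toNat_of_nonneg (sub_nonneg.2 hkl), add_sub_cancel]
  rw [hpow, ← div_div, Int.floor_div_natCast]
  norm_cast

namespace DyadicCube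

variable {d : ℕ}

lemma mem_toSet_iff {Q : DyadicCube d} {x : Fin d → ℝ} :
    x ∈ Q.toSet ↔ ∀ i, ⌊x i / 2 ^ Q.k⌋ = Q.j i := by
  have h2 : (0 : ℝ) < 2 ^ Q.k := zpow_pos two_pos _
  simp only [toSet, Set.mem_ofPred_eq, Int.floor_eq_iff, le_div_iff₀ h2, div_lt_iff₀ h2, mul_comm]

instance : Preorder (DyadicCube d) := Preorder.lift toSet

-- the index of the ancestor of `Q` at scale `R.k` is `⌊Q.j i / 2 ^ (R.k - Q.k)⌋`, whichever
-- point of `Q` it is read off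
lemma le_of_mem_of_k_le {Q R : DyadicCube d} {x : Fin d → ℝ} (hQ : x ∈ Q.toSet)
    (hR : x ∈ R.toSet) (hk : Q.k ≤ R.k) : Q ≤ R := by
  intro y hy
  rw [mem_toSet_iff] at hQ hR hy ⊢
  intro i
  rw [Int.floor_div_two_zpow_of_le hk, hy, ← hQ, ← Int.floor_div_two_zpow_of_le hk, hR]

lemma isChain_setOf_mem (x : Fin d → ℝ) : IsChain (· ≤ ·) {Q : DyadicCube d | x ∈ Q.toSet} :=
  fun Q hQ R hR _ => (le_total Q.k R.k).imp (le_of_mem_of_k_le hQ hR)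
    (le_of_mem_of_k_le hR hQ)

end DyadicCube

/-- STATEMENT 0: pointwise summation-by-parts comparison
`(∑_Q a_Q 1_Q)^p ≍_p ∑_Q a_Q 1_Q · (∑_{R ⊇ Q} a_R 1_R)^(p-1)`. -/
theorem stmt1 (p : ℝ) (hp : 0 < p) :
    ∃ c C : ℝ, 0 < c ∧ 0 < C ∧
      ∀ (d : ℕ) (a : DyadicCube d → ℝ),
        (∀ Q, 0 ≤ a Q) → (Function.support a).Finite →
        ∀ x : Fin d → ℝ,
          c * ∑ᶠ Q : DyadicCube d,
              Q.toSet.indicator (fun _ => a Q) x *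
                (∑ᶠ (R : DyadicCube d) (_ : Q.toSet ⊆ R.toSet),
                    R.toSet.indicator (fun _ => a R) x) ^ (p - 1)
            ≤ (∑ᶠ Q : DyadicCube d, Q.toSet.indicator (fun _ => a Q) x) ^ p ∧
          (∑ᶠ Q : DyadicCube d, Q.toSet.indicator (fun _ => a Q) x) ^ p ≤
            C * ∑ᶠ Q : DyadicCube d,
              Q.toSet.indicator (fun _ => a Q) x *
                (∑ᶠ (R : DyadicCube d) (_ : Q.toSet ⊆ R.toSet),
                    R.toSet.indicator (fun _ => a R) x) ^ (p - 1) := by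
  refine ⟨min 1 p, max 1 p, lt_min one_pos hp, one_pos.trans_le (le_max_left 1 p), ?_⟩
  intro d a ha hfin x
  have hsupp : Function.support (fun Q : DyadicCube d => Q.toSet.indicator (fun _ => a Q) x) ⊆
      {Q | x ∈ Q.toSet} ∩ Function.support a := by
    intro Q hQ
    by_cases hx : x ∈ Q.toSet
    · exact ⟨hx, by simpa [hx] using hQ⟩
    · simp [hx] at hQ
  exact rpow_finsum_bounds_of_isChain hp (fun Q => Set.indicator_nonneg (fun _ _ => ha Q) x)
    (hfin.subset (hsupp.trans Set.inter_subset_right))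
    ((DyadicCube.isChain_setOf_mem x).mono (hsupp.trans Set.inter_subset_left))
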